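/- Let γ, λ ∈ (0,1) and let (δ_k)_{k≥0} be a bounded sequence of real numbers (TD errors). Define the n-step advantage Â⁽ⁿ⁾ = Σ_{k=0}^{n−1} γᵏ δ_k. Then the exponentially weighted average (1−λ) Σ_{n=1}^{∞} λ^{n−1} Â⁽ⁿ⁾ converges and equals Σ_{k=0}^{∞} (γλ)ᵏ δ_k. -/

import Mathlib

/-!
Weighting the `n`-step sums by `(1 - λ) λⁿ` and collecting the coefficient of each term `aₖ`
is a Cauchy product of `(λᵏ aₖ)ₖ` with the geometric weights `((1 - λ) λʲ)ⱼ`, whose total mass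
is `1`. Both series converge absolutely, so the product may be summed in either order.
-/

open Finset

theorem summable_norm_pow_mul_of_norm_le {𝕜 : Type*} [NormedDivisionRing 𝕜] {r : 𝕜}
    (hr : ‖r‖ < 1) {a : ℕ → 𝕜} {M : ℝ} (ha : ∀ k, ‖a k‖ ≤ M) :
    Summable fun k => ‖r ^ k * a k‖ := by
  refine ((summable_geometric_of_lt_one (norm_nonneg r) hr).mul_right M).of_nonneg_of_le
    (fun k => norm_nonneg _) fun k => ?_
  rw [norm_mul, norm_pow]
  exact mul_le_mul_of_nonneg_left (ha k) (by positivity)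

section GeometricWeights

variable {𝕜 : Type*} [NormedField 𝕜] {lam : 𝕜}

theorem summable_norm_one_sub_mul_geometric (hlam : ‖lam‖ < 1) :
    Summable fun j : ℕ => ‖(1 - lam) * lam ^ j‖ := by
  simpa only [norm_mul, norm_pow] using
    (summable_geometric_of_lt_one (norm_nonneg lam) hlam).mul_left ‖1 - lam‖

theorem tsum_one_sub_mul_geometric (hlam : ‖lam‖ < 1) :
    ∑' j : ℕ, (1 - lam) * lam ^ j = 1 := by
  have hlam_ne : lam ≠ 1 := by rintro rfl; simp at hlam
  rw [tsum_mul_left, tsum_geometric_of_norm_lt_one hlam,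
    mul_inv_cancel₀ (sub_ne_zero.2 hlam_ne.symm)]

theorem hasSum_one_sub_mul_geometric_mul_sum_range [CompleteSpace 𝕜] (hlam : ‖lam‖ < 1)
    {a : ℕ → 𝕜} (ha : Summable fun k => ‖lam ^ k * a k‖) :
    HasSum (fun n => (1 - lam) * lam ^ n * ∑ k ∈ range (n + 1), a k)
      (∑' k, lam ^ k * a k) := by
  have hprod := hasSum_sum_range_mul_of_summable_norm ha
    (summable_norm_one_sub_mul_geometric hlam)
  rw [tsum_one_sub_mul_geometric hlam, mul_one] at hprod
  convert hprod using 1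
  funext n
  rw [mul_sum]
  refine sum_congr rfl fun k hk => ?_
  rw [← pow_mul_pow_sub lam (mem_range_succ_iff.1 hk)]
  ring

end GeometricWeights

theorem gae_exponential_average (γ lam : ℝ) (hγ : γ ∈ Set.Ioo (0 : ℝ) 1)
    (hlam : lam ∈ Set.Ioo (0 : ℝ) 1) (δ : ℕ → ℝ) (M : ℝ) (hb : ∀ k, |δ k| ≤ M) :
    Summable (fun k : ℕ => (γ * lam) ^ k * δ k) ∧
    HasSum
      (fun n : ℕ => (1 - lam) * lam ^ n * ∑ k ∈ Finset.range (n + 1), γ ^ k * δ k)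
      (∑' k : ℕ, (γ * lam) ^ k * δ k) := by
  obtain ⟨hγ0, hγ1⟩ := hγ
  obtain ⟨hlam0, hlam1⟩ := hlam
  have hlam_norm : ‖lam‖ < 1 := by rwa [Real.norm_of_nonneg hlam0.le]
  have hγlam_norm : ‖γ * lam‖ < 1 := by
    rw [Real.norm_of_nonneg (by positivity)]
    nlinarith
  have hsum := summable_norm_pow_mul_of_norm_le hγlam_norm hb
  have hterm : ∀ k, lam ^ k * (γ ^ k * δ k) = (γ * lam) ^ k * δ k := fun k => by ring
  simp_rw [← hterm] at hsum ⊢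
  exact ⟨hsum.of_norm, hasSum_one_sub_mul_geometric_mul_sum_range hlam_norm hsum⟩
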